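/- For every r > 0 and λ ∈ (0,1), the equation f(p₀) = 1 has exactly one solution p₀ in the open interval (0,1): there exists a unique p₀ ∈ (0,1) with f(p₀) = 1. -/

import Mathlib

/-!
The ratio `g_{i+1}(x) / g_i(x) = r(1 - λx) / (r + (i+1)x)` gives the first-moment identity
`∑ i gᵢ(x) = r(1 - λ f(x))`.

Existence: `f` is continuous on `[a, 1]` (domination by `(r/a)^i / i!`) and `f(1) > 1`, while
`gᵢ ≤ x` together with the identity and Markov's inequality gives `f(x) ≤ N x + r / N`, which is
`< 1` for `N > 2r` and `x = 1/(2N)`.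

Uniqueness: if `f(a) = f(b)` with `a < b`, the sequences `gᵢ(a)` and `gᵢ(b)` have equal sums and,
by the identity, equal first moments. But `gᵢ(b) / gᵢ(a)` is strictly decreasing in `i` and
`g₀(b) > g₀(a)`, so the two sequences cross exactly once, and the first moments differ.
-/

open scoped BigOperators

/-- `g r lam i x = x · r^i (1−λx)^i / ∏_{j=1}^i (r + j·x)`; for `i = 0` this is `x`. -/
noncomputable def g (r lam : ℝ) (i : ℕ) (x : ℝ) : ℝ :=
  x * r ^ i * (1 - lam * x) ^ i / ∏ j ∈ Finset.Icc 1 i, (r + (j : ℝ) * x)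

/-- `f r lam x = Σ_{i=0}^∞ g_i(x)`. -/
noncomputable def f (r lam : ℝ) (x : ℝ) : ℝ := ∑' i : ℕ, g r lam i x

open Finset Set
open scoped Nat

theorem apply_zero_le_of_crossing {p q : ℕ → ℝ} (hp : Summable p) (hq : Summable q)
    (hp' : Summable fun i : ℕ => (i : ℝ) * p i) (hq' : Summable fun i : ℕ => (i : ℝ) * q i)
    (hsum : ∑' i, p i = ∑' i, q i) (hmean : ∑' i : ℕ, (i : ℝ) * p i = ∑' i : ℕ, (i : ℝ) * q i)
    (hcross : ∀ i, q i < p i → q (i + 1) < p (i + 1)) : q 0 ≤ p 0 := by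
  classical
  by_contra! h0
  have hex : ∃ k, q k < p k := by
    by_contra! hle
    exact (hp.tsum_lt_tsum hle h0 hq).ne hsum
  set k := Nat.find hex
  have hbefore (i : ℕ) (hi : i < k) : p i ≤ q i := not_lt.1 (Nat.find_min hex hi)
  have hafter (i : ℕ) (hi : k ≤ i) : q i < p i := by
    induction i, hi using Nat.le_induction with
    | base => exact Nat.find_spec hex
    | succ i _ ih => exact hcross i ih
  have hk : 0 < k := Nat.pos_of_ne_zero fun hk => (hafter 0 hk.le).asymm h0
  -- the weights `i - k` make every term of `∑ (i - k) (p i - q i) = 0` nonnegative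
  set F : ℕ → ℝ := fun i => ((i : ℝ) - k) * (p i - q i)
  have hF_eq : F = fun i : ℕ => ((i : ℝ) * p i - i * q i) - ((k : ℝ) * p i - k * q i) := by
    ext i; ring
  have hF_summable : Summable F := hF_eq ▸ (hp'.sub hq').sub ((hp.mul_left _).sub (hq.mul_left _))
  have hF : ∑' i, F i = 0 := by
    rw [hF_eq, (hp'.sub hq').tsum_sub ((hp.mul_left _).sub (hq.mul_left _)), hp'.tsum_sub hq',
      (hp.mul_left _).tsum_sub (hq.mul_left _), tsum_mul_left, tsum_mul_left, hsum, hmean]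
    ring
  have hF_nonneg (i : ℕ) : 0 ≤ F i := by
    rcases lt_or_ge i k with hi | hi
    · exact mul_nonneg_of_nonpos_of_nonpos (by simp [hi.le]) (by linarith [hbefore i hi])
    · exact mul_nonneg (by simp [hi]) (by linarith [hafter i hi])
  have hF0 : 0 < F 0 := mul_pos_of_neg_of_neg (by simpa using hk) (by linarith)
  exact (hF ▸ hF_summable.tsum_pos hF_nonneg 0 hF0).false

section

variable {r lam x : ℝ}

@[simp]
lemma g_zero : g r lam 0 x = x := by
  simp [g]

lemma g_pos (hr : 0 < r) (hx : 0 < x) (hlx : lam * x < 1) (i : ℕ) : 0 < g r lam i x := by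
  have : 0 < 1 - lam * x := by linarith
  unfold g
  exact div_pos (by positivity) (prod_pos fun j _ => by positivity)

lemma g_succ (hr : 0 < r) (hx : 0 < x) (i : ℕ) :
    g r lam (i + 1) x = g r lam i x * (r * (1 - lam * x) / (r + (i + 1) * x)) := by
  have hP : ∏ j ∈ Icc 1 i, (r + (j : ℝ) * x) ≠ 0 := (prod_pos fun j _ => by positivity).ne'
  have hd : r + ((i : ℝ) + 1) * x ≠ 0 := by positivity
  simp only [g, prod_Icc_succ_top (Nat.le_add_left 1 i), Nat.cast_succ]
  field_simp
  ring

lemma mul_g_succ (hr : 0 < r) (hx : 0 < x) (i : ℕ) :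
    (r + (i + 1) * x) * g r lam (i + 1) x = r * (1 - lam * x) * g r lam i x := by
  rw [g_succ hr hx]
  field_simp

lemma g_succ_le (hr : 0 < r) (hlam : 0 ≤ lam) (hx : 0 < x) (hlx : lam * x < 1) (i : ℕ) :
    g r lam (i + 1) x ≤ g r lam i x := by
  have hrec := mul_g_succ (lam := lam) hr hx i
  have hg := g_pos hr hx hlx i
  have hg' := g_pos hr hx hlx (i + 1)
  nlinarith [mul_nonneg (mul_nonneg hr.le (mul_nonneg hlam hx.le)) hg.le,
    mul_nonneg (by positivity : (0 : ℝ) ≤ (i + 1) * x) hg'.le]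

lemma g_le_self (hr : 0 < r) (hlam : 0 ≤ lam) (hx : 0 < x) (hlx : lam * x < 1) (i : ℕ) :
    g r lam i x ≤ x := by
  simpa using antitone_nat_of_succ_le (f := fun i => g r lam i x) (g_succ_le hr hlam hx hlx)
    (Nat.zero_le i)

lemma g_le_pow_div_factorial (hr : 0 < r) (hx : 0 < x) (hlx : lam * x < 1) (i : ℕ) :
    g r lam i x ≤ x * (r * (1 - lam * x) / x) ^ i / i ! := by
  have hc : 0 ≤ r * (1 - lam * x) := mul_nonneg hr.le (by linarith)
  induction i with
  | zero => simp
  | succ i ih =>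
    have hratio : r * (1 - lam * x) / (r + (i + 1) * x) ≤ r * (1 - lam * x) / ((i + 1) * x) :=
      div_le_div_of_nonneg_left hc (by positivity) (by linarith)
    calc g r lam (i + 1) x
        ≤ x * (r * (1 - lam * x) / x) ^ i / i ! * (r * (1 - lam * x) / ((i + 1) * x)) := by
          rw [g_succ hr hx]
          exact mul_le_mul ih hratio (by positivity) (by positivity)
      _ = x * (r * (1 - lam * x) / x) ^ (i + 1) / (i + 1)! := by
          have := hx.ne'
          rw [Nat.factorial_succ, pow_succ]
          push_cast
          field_simp

lemma summable_g (hr : 0 < r) (hx : 0 < x) (hlx : lam * x < 1) :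
    Summable fun i => g r lam i x :=
  ((Real.summable_pow_div_factorial (r * (1 - lam * x) / x)).mul_left x).of_nonneg_of_le
    (fun i => (g_pos hr hx hlx i).le) fun i => (g_le_pow_div_factorial hr hx hlx i).trans_eq
      (mul_div_assoc _ _ _)

lemma summable_nat_mul_g (hr : 0 < r) (hx : 0 < x) (hlx : lam * x < 1) :
    Summable fun i : ℕ => (i : ℝ) * g r lam i x := by
  refine (summable_nat_add_iff 1).1 ?_
  refine ((summable_g hr hx hlx).mul_left (r * (1 - lam * x) / x)).of_nonneg_of_le
    (fun i => by have := g_pos hr hx hlx (i + 1); positivity) fun i => ?_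
  have hrec := mul_g_succ (lam := lam) hr hx i
  have hg := g_pos hr hx hlx (i + 1)
  rw [div_mul_eq_mul_div, le_div_iff₀ hx]
  push_cast
  nlinarith

theorem tsum_nat_mul_g (hr : 0 < r) (hx : 0 < x) (hlx : lam * x < 1) :
    ∑' i : ℕ, (i : ℝ) * g r lam i x = r * (1 - lam * f r lam x) := by
  have hg := summable_g hr hx hlx
  have hg_succ : Summable fun i => g r lam (i + 1) x :=
    (summable_nat_add_iff (f := fun i => g r lam i x) 1).2 hg
  have hf : f r lam x = x + ∑' i : ℕ, g r lam (i + 1) x := by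
    rw [f, hg.tsum_eq_zero_add, g_zero]
  have hshift : ∑' i : ℕ, (i : ℝ) * g r lam i x
      = ∑' i : ℕ, ((i : ℝ) + 1) * g r lam (i + 1) x := by
    rw [(summable_nat_mul_g hr hx hlx).tsum_eq_zero_add]
    simp only [Nat.cast_zero, zero_mul, zero_add, Nat.cast_succ]
  have hterm (i : ℕ) : x * (((i : ℝ) + 1) * g r lam (i + 1) x)
      = r * (1 - lam * x) * g r lam i x - r * g r lam (i + 1) x := by
    linear_combination mul_g_succ (lam := lam) hr hx i
  refine mul_left_cancel₀ hx.ne' ?_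
  rw [hshift, ← tsum_mul_left, tsum_congr hterm, (hg.mul_left _).tsum_sub (hg_succ.mul_left r),
    tsum_mul_left, tsum_mul_left, ← f, hf]
  ring

lemma g_succ_lt_g_succ {a b : ℝ} (hr : 0 < r) (hlam : 0 ≤ lam) (ha : 0 < a) (hab : a < b)
    (hlb : lam * b < 1) (i : ℕ) (h : g r lam i b < g r lam i a) :
    g r lam (i + 1) b < g r lam (i + 1) a := by
  have hb : 0 < b := ha.trans hab
  have hratio : r * (1 - lam * b) / (r + (i + 1) * b) < r * (1 - lam * a) / (r + (i + 1) * a) := by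
    rw [div_lt_div_iff₀ (by positivity) (by positivity)]
    nlinarith [mul_pos hr (mul_pos (sub_pos.2 hab) (by positivity : 0 < r * lam + (i + 1)))]
  rw [g_succ hr ha, g_succ hr hb]
  exact mul_lt_mul'' h hratio (g_pos hr hb hlb i).le
    (div_nonneg (mul_nonneg hr.le (by linarith)) (by positivity))

theorem injOn_f (hr : 0 < r) (hlam₀ : 0 ≤ lam) (hlam₁ : lam ≤ 1) :
    InjOn (f r lam) (Ioo 0 1) := by
  intro a ha b hb hfab
  wlog hab : a < b generalizing a b
  · rcases (not_lt.1 hab).eq_or_lt with h | h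
    · exact h.symm
    · exact (this hb ha hfab.symm h).symm
  have hla : lam * a < 1 := mul_lt_one_of_nonneg_of_lt_one_right hlam₁ ha.1.le ha.2
  have hlb : lam * b < 1 := mul_lt_one_of_nonneg_of_lt_one_right hlam₁ hb.1.le hb.2
  have hmean : ∑' i : ℕ, (i : ℝ) * g r lam i a = ∑' i : ℕ, (i : ℝ) * g r lam i b := by
    rw [tsum_nat_mul_g hr ha.1 hla, tsum_nat_mul_g hr hb.1 hlb, hfab]
  have := apply_zero_le_of_crossing (summable_g hr ha.1 hla) (summable_g hr hb.1 hlb)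
    (summable_nat_mul_g hr ha.1 hla) (summable_nat_mul_g hr hb.1 hlb) hfab hmean
    (g_succ_lt_g_succ hr hlam₀ ha.1 hab hlb)
  rw [g_zero, g_zero] at this
  exact (this.not_gt hab).elim

lemma f_le_nat_mul_add_div (hr : 0 < r) (hlam : 0 ≤ lam) (hx : 0 < x) (hlx : lam * x < 1)
    {N : ℕ} (hN : 0 < N) : f r lam x ≤ N * x + r / N := by
  have hg := summable_g hr hx hlx
  have hmul := summable_nat_mul_g hr hx hlx
  have hg_nonneg (i : ℕ) : 0 ≤ g r lam i x := (g_pos hr hx hlx i).le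
  have hhead : ∑ i ∈ range N, g r lam i x ≤ N * x := by
    simpa using sum_le_card_nsmul (range N) _ _ fun i _ => g_le_self hr hlam hx hlx i
  -- Markov's inequality: the tail beyond `N` is at most `(∑ i gᵢ) / N ≤ r / N`
  have htail : N * ∑' i, g r lam (i + N) x ≤ r := calc
    N * ∑' i, g r lam (i + N) x = ∑' i, (N : ℝ) * g r lam (i + N) x := tsum_mul_left.symm
    _ ≤ ∑' i, ((i + N : ℕ) : ℝ) * g r lam (i + N) x :=
      ((hg.comp_injective (add_left_injective N)).mul_left _).tsum_le_tsum
        (fun i => mul_le_mul_of_nonneg_right (by simp) (hg_nonneg _))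
        ((summable_nat_add_iff N).2 hmul)
    _ ≤ ∑' i : ℕ, (i : ℝ) * g r lam i x := by
      rw [← hmul.sum_add_tsum_nat_add N]
      exact le_add_of_nonneg_left (sum_nonneg fun i _ => mul_nonneg i.cast_nonneg (hg_nonneg i))
    _ = r * (1 - lam * f r lam x) := tsum_nat_mul_g hr hx hlx
    _ ≤ r := by
      have : 0 ≤ lam * f r lam x := mul_nonneg hlam (tsum_nonneg hg_nonneg)
      nlinarith
  have hN' : (0 : ℝ) < N := by exact_mod_cast hN
  rw [f, ← hg.sum_add_tsum_nat_add N]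
  exact add_le_add hhead ((le_div_iff₀' hN').2 htail)

lemma one_lt_f_one (hr : 0 < r) (hlam : lam < 1) : 1 < f r lam 1 := by
  have hl : lam * 1 < 1 := by simpa using hlam
  have hg := summable_g hr one_pos hl
  rw [f, hg.tsum_eq_zero_add, g_zero, lt_add_iff_pos_right]
  exact ((summable_nat_add_iff 1).2 hg).tsum_pos (fun i => (g_pos hr one_pos hl _).le) 0
    (g_pos hr one_pos hl _)

theorem continuousOn_f (hr : 0 < r) (hlam₀ : 0 ≤ lam) (hlam₁ : lam < 1) {a : ℝ} (ha : 0 < a) :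
    ContinuousOn (f r lam) (Icc a 1) := by
  refine continuousOn_tsum (u := fun i => (r / a) ^ i / i !) (fun i => ?_)
    (Real.summable_pow_div_factorial _) fun i x hx => ?_
  · exact ContinuousOn.div (by fun_prop) (by fun_prop)
      fun x hx => (prod_pos fun j _ => by have := ha.trans_le hx.1; positivity).ne'
  · have hx₀ : 0 < x := ha.trans_le hx.1
    have hlx : lam * x < 1 := mul_lt_one_of_nonneg_of_lt_one_left hlam₀ hlam₁ hx.2
    have hc : r * (1 - lam * x) / x ≤ r / a :=
      div_le_div₀ hr.le (by nlinarith [mul_nonneg hr.le (mul_nonneg hlam₀ hx₀.le)]) ha hx.1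
    rw [Real.norm_of_nonneg (g_pos hr hx₀ hlx i).le]
    calc g r lam i x ≤ x * (r * (1 - lam * x) / x) ^ i / i ! := g_le_pow_div_factorial hr hx₀ hlx i
      _ ≤ 1 * (r / a) ^ i / i ! := by
        have hc₀ : 0 ≤ r * (1 - lam * x) / x := div_nonneg (mul_nonneg hr.le (by linarith)) hx₀.le
        gcongr
        exact hx.2
      _ = (r / a) ^ i / i ! := by rw [one_mul]

lemma exists_f_lt_one (hr : 0 < r) (hlam₀ : 0 ≤ lam) (hlam₁ : lam ≤ 1) :
    ∃ x ∈ Ioo (0 : ℝ) 1, f r lam x < 1 := by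
  set N : ℕ := ⌈2 * r⌉₊ + 1
  have hN : (0 : ℝ) < N := by positivity
  have hrN : 2 * r < N := by
    have := Nat.le_ceil (2 * r)
    simp only [N]; push_cast; linarith
  have hx : (0 : ℝ) < 1 / (2 * N) := by positivity
  have hx₁ : 1 / (2 * N) < (1 : ℝ) := by
    rw [div_lt_one (by positivity)]; linarith [show (1 : ℝ) ≤ N by simp [N]]
  refine ⟨1 / (2 * N), ⟨hx, hx₁⟩, ?_⟩
  calc f r lam (1 / (2 * N)) ≤ N * (1 / (2 * N)) + r / N :=
        f_le_nat_mul_add_div hr hlam₀ hx (mul_lt_one_of_nonneg_of_lt_one_right hlam₁ hx.le hx₁)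
          (by positivity)
    _ < 1 := by
      have hhalf : N * (1 / (2 * N)) = (1 / 2 : ℝ) := by field_simp
      have hrN' : r / N < 1 / 2 := by rw [div_lt_iff₀ hN]; linarith
      linarith

end

theorem stmt4 (r lam : ℝ) (hr : 0 < r) (hlam : lam ∈ Set.Ioo (0:ℝ) 1) :
    ∃! p₀ : ℝ, p₀ ∈ Set.Ioo (0:ℝ) 1 ∧ f r lam p₀ = 1 := by
  obtain ⟨hlam₀, hlam₁⟩ := hlam
  obtain ⟨x₀, ⟨hx₀, hx₀₁⟩, hfx₀⟩ := exists_f_lt_one hr hlam₀.le hlam₁.le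
  obtain ⟨p, hp, hfp⟩ := intermediate_value_Ioo hx₀₁.le (continuousOn_f hr hlam₀.le hlam₁ hx₀)
    ⟨hfx₀, one_lt_f_one hr hlam₁⟩
  have hp' : p ∈ Ioo (0 : ℝ) 1 := ⟨hx₀.trans hp.1, hp.2⟩
  exact ⟨p, ⟨hp', hfp⟩, fun y hy => injOn_f hr hlam₀.le hlam₁.le hy.1 hp' (hy.2.trans hfp.symm)⟩
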